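/- arXiv:2005.04406 — 2 statements merged into one kernel-verified Lean document; each statement's English description precedes it below -/
import Mathlib

section
/- Let μ < ν be valuations on K[x] and let φ ∈ KP(μ) be an MLV key polynomial for μ. If φ ∉ Φ_{μ,ν} and deg φ > deg(μ), then φ is not an (abstract) key polynomial for ν. -/
/-!
Suppose `φ` were a key polynomial for `ν`. If `μ φ < ν φ`, then, since `φ ∉ Φ_{μ,ν}`, some
`χ ∈ Φ_{μ,ν}` has smaller degree; as `μ` and `ν` agree below `deg χ`, the remainder of `φ` modulo
`χ` has larger `μ`-value than `φ`, so `(φ /ₘ χ) χ ∼_μ φ`, and `μ`-irreducibility of `φ` contradicts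
its `μ`-minimality. If `μ φ = ν φ`, take an MLV key polynomial `ψ` for `μ` of smaller degree: by
`μ`-minimality every term `a_s ψ^s` of the `ψ`-expansion of `φ` has `ν`-value at least `ν φ`.
Polynomials of degree `< deg φ` have `ε < ε(φ)`, and this bound survives products, so
`ν (∂_b φ) > ν φ - b ε(φ)` for every `b ≥ 1`, contradicting the definition of `ε(φ)`.
-/

open Polynomial

namespace KeyPolPaper

variable {K : Type*} [Field K] {Λ : Type*} [AddCommGroup Λ] [LinearOrder Λ] [IsOrderedAddMonoid Λ]

/-- A valuation on `F[X]` with values in `Λ ∪ {∞}`: multiplicative, satisfies the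
ultrametric inequality, and is finite on nonzero constants. -/
def IsValuation {F : Type*} [Field F] (w : F[X] → WithTop Λ) : Prop :=
  w 0 = ⊤ ∧ (∀ f g : F[X], w (f * g) = w f + w g) ∧
    (∀ f g : F[X], min (w f) (w g) ≤ w (f + g)) ∧
    ∀ a : F, a ≠ 0 → w (C a) ≠ ⊤

/-- `μ ≤ ν` for valuations on `K[X]`. -/
def ValLE (μ ν : K[X] → WithTop Λ) : Prop := ∀ f : K[X], μ f ≤ ν f

/-- `μ < ν` for valuations on `K[X]`. -/
def ValLT (μ ν : K[X] → WithTop Λ) : Prop := ValLE μ ν ∧ μ ≠ ν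

/-- ν-equivalence: `f ∼_ν g` iff `ν (f - g) > ν f`. -/
def VEquiv (ν : K[X] → WithTop Λ) (f g : K[X]) : Prop := ν f < ν (f - g)

/-- ν-divisibility: `h ∣_ν g` iff `g ∼_ν q * h` for some `q`. -/
def VDvd (ν : K[X] → WithTop Λ) (h g : K[X]) : Prop := ∃ q : K[X], VEquiv ν g (q * h)

/-- MacLane–Vaquié key polynomial: monic, ν-minimal and ν-irreducible. -/
def IsMLVKey (ν : K[X] → WithTop Λ) (φ : K[X]) : Prop :=
  φ.Monic ∧ (∀ f : K[X], f ≠ 0 → f.natDegree < φ.natDegree → ¬ VDvd ν φ f) ∧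
    ¬ VDvd ν φ 1 ∧ ∀ f g : K[X], VDvd ν φ (f * g) → VDvd ν φ f ∨ VDvd ν φ g

/-- `e` is the value `ε(f) = max_{b ≥ 1} (ν f - ν (∂_b f)) / b`; phrased multiplicatively,
`e` satisfies `ν f ≤ ν (∂_b f) + b • e` for all `b ≥ 1`, with equality for some `b ≥ 1`.
If `ν f = ∞` then `ε(f) = ∞`. -/
def IsEps (ν : K[X] → WithTop Λ) (f : K[X]) (e : WithTop Λ) : Prop :=
  (ν f = ⊤ ∧ e = ⊤) ∨
    (ν f ≠ ⊤ ∧ (∀ b : ℕ, 1 ≤ b → ν f ≤ ν (hasseDeriv b f) + b • e) ∧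
      ∃ b : ℕ, 1 ≤ b ∧ ν f = ν (hasseDeriv b f) + b • e)

/-- The invariant `ε(f)`; well defined (for non-constant `f`) since `Λ` is divisible and
the defining property determines `e` uniquely. -/
noncomputable def eps (ν : K[X] → WithTop Λ) (f : K[X]) : WithTop Λ :=
  letI := Classical.propDecidable (∃ e : WithTop Λ, IsEps ν f e)
  if h : ∃ e : WithTop Λ, IsEps ν f e then h.choose else ⊤

/-- The set `I(f)` of indices `b ≥ 1` with `ν (∂_b f) = ν f - b • ε(f)`. -/
def epsAttain (ν : K[X] → WithTop Λ) (f : K[X]) : Set ℕ :=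
  {b : ℕ | 1 ≤ b ∧ ν f = ν (hasseDeriv b f) + b • eps ν f}

/-- Abstract key polynomial for `ν`. -/
def IsKeyPoly (ν : K[X] → WithTop Λ) (Q : K[X]) : Prop :=
  Q.Monic ∧ 0 < Q.natDegree ∧
    ∀ f : K[X], 0 < f.natDegree → f.natDegree < Q.natDegree → eps ν f < eps ν Q

/-- The `s`-th coefficient of the canonical `Q`-expansion `f = Σ_s a_s Q^s`,
`deg a_s < deg Q`. -/
noncomputable def qCoeff (Q f : K[X]) (s : ℕ) : K[X] := ((· /ₘ Q)^[s] f) %ₘ Q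

/-- The truncation `ν_Q (f) = min_s ν (a_s Q^s)`. -/
noncomputable def trunc (ν : K[X] → WithTop Λ) (Q f : K[X]) : WithTop Λ :=
  (Finset.range (f.natDegree + 1)).inf fun s => ν (qCoeff Q f s * Q ^ s)

/-- `S_{ν,Q}(f)`: the set of indices attaining the minimum in `ν_Q(f)`. -/
def attain (ν : K[X] → WithTop Λ) (Q f : K[X]) : Set ℕ :=
  {s : ℕ | ν (qCoeff Q f s * Q ^ s) = trunc ν Q f}

/-- The augmented valuation `[μ; φ, γ] (f) = min_s (μ (a_s) + s • γ)` on φ-expansions. -/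
noncomputable def augVal (μ : K[X] → WithTop Λ) (φ : K[X]) (γ : WithTop Λ) (f : K[X]) :
    WithTop Λ :=
  (Finset.range (f.natDegree + 1)).inf fun s => μ (qCoeff φ f s) + s • γ

/-- `Φ_{μ,ν}`: monic polynomials of minimal degree with `μ φ < ν φ`. -/
def PhiSet (μ ν : K[X] → WithTop Λ) : Set K[X] :=
  {φ : K[X] | φ.Monic ∧ μ φ < ν φ ∧
    ∀ ψ : K[X], ψ.Monic → μ ψ < ν ψ → φ.natDegree ≤ ψ.natDegree}

/-- `mult f`: the least `b ≥ 1` with `∂_b f ≠ 0`. -/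
noncomputable def multOf (f : K[X]) : ℕ := sInf {b : ℕ | 1 ≤ b ∧ hasseDeriv b f ≠ 0}

/-- Abstract limit key polynomial for `ν` (conditions (K1)-(K4)). -/
def IsLimitKeyPoly (ν : K[X] → WithTop Λ) (Q : K[X]) : Prop :=
  Q.Monic ∧
    ∃ Qm : K[X], IsKeyPoly ν Qm ∧ ValLT (trunc ν Qm) ν ∧
      (∃ χ ∈ PhiSet (trunc ν Qm) ν, Qm.natDegree = χ.natDegree) ∧
      (∀ χ ∈ PhiSet (trunc ν Qm) ν, ∃ χ' ∈ PhiSet (trunc ν Qm) ν, ν χ < ν χ') ∧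
      (∀ χ ∈ PhiSet (trunc ν Qm) ν, trunc ν χ Q < ν Q) ∧
      ∀ Q' : K[X], Q'.Monic →
        (∀ χ ∈ PhiSet (trunc ν Qm) ν, trunc ν χ Q' < ν Q') → Q.natDegree ≤ Q'.natDegree

/-- A continuous MacLane chain of stable degree `m`: valuations `ρ_0 < ρ_1 < ⋯`,
monic key polynomials `χ_i` (for `i ≥ 1`) of degree `m`, with
`ρ_i = [ρ_{i-1}; χ_i, β_i]`, `β_i = ρ_i (χ_i) > ρ_{i-1} (χ_i)` and
`χ_{i+1} ∤_{ρ_i} χ_i`. -/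
structure MacLaneChain (K : Type*) [Field K] (Λ : Type*) [AddCommGroup Λ] [LinearOrder Λ] [IsOrderedAddMonoid Λ] where
  m : ℕ
  hm : 0 < m
  ρ : ℕ → K[X] → WithTop Λ
  χ : ℕ → K[X]
  β : ℕ → Λ
  isVal : ∀ i : ℕ, IsValuation (ρ i)
  mono : ∀ i : ℕ, ValLT (ρ i) (ρ (i + 1))
  monicChi : ∀ i : ℕ, (χ (i + 1)).Monic
  degChi : ∀ i : ℕ, (χ (i + 1)).natDegree = m
  keyChi : ∀ i : ℕ, IsMLVKey (ρ i) (χ (i + 1))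
  beta_def : ∀ i : ℕ, ρ (i + 1) (χ (i + 1)) = (β (i + 1) : WithTop Λ)
  beta_lt : ∀ i : ℕ, ρ i (χ (i + 1)) < (β (i + 1) : WithTop Λ)
  aug : ∀ i : ℕ, ρ (i + 1) = augVal (ρ i) (χ (i + 1)) (β (i + 1) : WithTop Λ)
  not_dvd : ∀ i : ℕ, ¬ VDvd (ρ (i + 1)) (χ (i + 2)) (χ (i + 1))

/-- A polynomial is stable w.r.t. the chain if its values `ρ_i f` are eventually constant. -/
def MacLaneChain.Stable (ch : MacLaneChain K Λ) (f : K[X]) : Prop :=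
  ∃ i0 : ℕ, ∀ i : ℕ, i0 ≤ i → ch.ρ i f = ch.ρ i0 f

/-- The chain is essential: non-stable polynomials exist and all have degree `> m`. -/
def MacLaneChain.Essential (ch : MacLaneChain K Λ) : Prop :=
  (∃ f : K[X], ¬ ch.Stable f) ∧ ∀ f : K[X], ¬ ch.Stable f → ch.m < f.natDegree

/-- MLV limit key polynomials of the chain: monic non-stable polynomials of minimal
degree `m_∞`. -/
def MacLaneChain.IsLimKP (ch : MacLaneChain K Λ) (φ : K[X]) : Prop :=
  φ.Monic ∧ ¬ ch.Stable φ ∧ ∀ f : K[X], ¬ ch.Stable f → φ.natDegree ≤ f.natDegree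

/-- Convex subgroup of a linearly ordered abelian group. -/
def IsConvexSubgroup (H : AddSubgroup Λ) : Prop :=
  ∀ x y : Λ, 0 < x → x < y → y ∈ H → x ∈ H

/-- The value group of a valuation: the subgroup of `Λ` generated by the finite values. -/
def valueGroup {F : Type*} [Field F] (ρ : F[X] → WithTop Λ) : AddSubgroup Λ :=
  AddSubgroup.closure {γ : Λ | ∃ f : F[X], ρ f = (γ : WithTop Λ)}

end KeyPolPaper

open Finset

namespace KeyPolPaper

section

variable {K : Type*} [Field K] {Λ : Type*} [LinearOrder Λ]

section WithTop

variable [AddCommGroup Λ] [IsOrderedAddMonoid Λ]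

lemma withTop_nsmul_lt_nsmul {n : ℕ} (hn : n ≠ 0) {a b : WithTop Λ} (h : a < b) :
    n • a < n • b := by
  lift a to Λ using h.ne_top
  rw [← WithTop.coe_nsmul]
  induction b with
  | top =>
    obtain ⟨m, rfl⟩ := Nat.exists_eq_add_one_of_ne_zero hn
    rw [succ_nsmul (⊤ : WithTop Λ), WithTop.add_top]
    exact WithTop.coe_lt_top _
  | coe b =>
    rw [← WithTop.coe_nsmul, WithTop.coe_lt_coe]
    exact nsmul_lt_nsmul_right hn (WithTop.coe_lt_coe.1 h)

end WithTop

section Valuation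

variable [AddCommGroup Λ] {w : K[X] → WithTop Λ}

lemma IsValuation.map_zero (hw : IsValuation w) : w 0 = ⊤ := hw.1

lemma IsValuation.map_mul (hw : IsValuation w) (f g : K[X]) : w (f * g) = w f + w g :=
  hw.2.1 f g

lemma IsValuation.min_le_map_add (hw : IsValuation w) (f g : K[X]) :
    min (w f) (w g) ≤ w (f + g) :=
  hw.2.2.1 f g

lemma IsValuation.map_C_ne_top (hw : IsValuation w) {a : K} (ha : a ≠ 0) : w (C a) ≠ ⊤ :=
  hw.2.2.2 a ha

lemma IsValuation.map_one (hw : IsValuation w) : w 1 = 0 := by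
  have h1 : w 1 ≠ ⊤ := by simpa using hw.map_C_ne_top one_ne_zero
  have h := hw.map_mul 1 1
  rw [one_mul] at h
  lift w 1 to Λ using h1 with a
  exact_mod_cast left_eq_add.1 (by exact_mod_cast h : a = a + a)

variable [IsOrderedAddMonoid Λ]

lemma IsValuation.map_neg (hw : IsValuation w) (f : K[X]) : w (-f) = w f := by
  have hm1 : w (-1) = 0 := by
    have h1 : w (-1) ≠ ⊤ := by simpa using hw.map_C_ne_top (neg_ne_zero.2 (one_ne_zero (α := K)))
    have h := hw.map_mul (-1) (-1)
    rw [neg_one_mul, neg_neg, hw.map_one] at h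
    lift w (-1) to Λ using h1 with a
    rw [← WithTop.coe_add, ← two_nsmul] at h
    exact_mod_cast two_nsmul_eq_zero.1 (WithTop.coe_eq_zero.1 h.symm)
  rw [← neg_one_mul, hw.map_mul, hm1, zero_add]

lemma IsValuation.map_add_of_lt (hw : IsValuation w) {f g : K[X]} (h : w f < w g) :
    w (f + g) = w f := by
  refine le_antisymm ?_ ((min_eq_left h.le).symm.trans_le (hw.min_le_map_add f g))
  have h' := hw.min_le_map_add (f + g) (-g)
  rw [add_neg_cancel_right, hw.map_neg] at h'
  exact (min_le_iff.1 h').resolve_right h.not_ge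

lemma IsValuation.lt_map_sum_add (hw : IsValuation w) {ι : Type*} {s : Finset ι}
    {F : ι → K[X]} {B d : WithTop Λ} (hB : B ≠ ⊤) (h : ∀ i ∈ s, B < w (F i) + d) :
    B < w (∑ i ∈ s, F i) + d := by
  classical
  induction s using Finset.induction_on with
  | empty => rw [sum_empty, hw.map_zero, top_add]; exact hB.lt_top
  | insert a s ha ih =>
    rw [sum_insert ha]
    calc B < min (w (F a) + d) (w (∑ i ∈ s, F i) + d) :=
          lt_min (h a (mem_insert_self a s)) (ih fun i hi => h i (mem_insert_of_mem hi))
      _ = min (w (F a)) (w (∑ i ∈ s, F i)) + d := min_add_add_right _ _ _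
      _ ≤ w (F a + ∑ i ∈ s, F i) + d := add_le_add_left (hw.min_le_map_add _ _) _

end Valuation

section Expansion

lemma qCoeff_zero (Q : K[X]) (s : ℕ) : qCoeff Q 0 s = 0 := by
  rw [qCoeff, Function.iterate_fixed (zero_divByMonic Q), zero_modByMonic]

lemma qCoeff_zero_eq_modByMonic (Q f : K[X]) : qCoeff Q f 0 = f %ₘ Q := rfl

lemma qCoeff_succ (Q f : K[X]) (s : ℕ) : qCoeff Q f (s + 1) = qCoeff Q (f /ₘ Q) s := by
  rw [qCoeff, Function.iterate_succ_apply]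
  rfl

lemma natDegree_qCoeff_lt {Q f : K[X]} {s : ℕ} (hQ : Q.Monic) (h : qCoeff Q f s ≠ 0) :
    (qCoeff Q f s).natDegree < Q.natDegree :=
  natDegree_lt_natDegree h (degree_modByMonic_lt _ hQ)

lemma sum_qCoeff_mul_pow {Q : K[X]} (hQ : Q.Monic) (hQ0 : 0 < Q.natDegree) :
    ∀ {M : ℕ} {f : K[X]}, f.natDegree < M → ∑ s ∈ range M, qCoeff Q f s * Q ^ s = f
  | 0, _, hf => absurd hf (Nat.not_lt_zero _)
  | M + 1, f, hf => by
    have hq : ∑ s ∈ range M, qCoeff Q (f /ₘ Q) s * Q ^ s = f /ₘ Q := by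
      by_cases hfQ : f.natDegree < Q.natDegree
      · rw [(divByMonic_eq_zero_iff hQ).2 (degree_lt_degree hfQ)]
        simp [qCoeff_zero]
      · exact sum_qCoeff_mul_pow hQ hQ0 (by rw [natDegree_divByMonic f hQ]; omega)
    rw [sum_range_succ', qCoeff_zero_eq_modByMonic, pow_zero, mul_one]
    simp_rw [qCoeff_succ, pow_succ, ← mul_assoc, ← sum_mul, hq]
    linear_combination modByMonic_add_div f Q

end Expansion

section Minimality

variable {w : K[X] → WithTop Λ}

def VMinimal (w : K[X] → WithTop Λ) (φ : K[X]) : Prop :=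
  ∀ f : K[X], f ≠ 0 → f.natDegree < φ.natDegree → ¬ VDvd w φ f

lemma IsMLVKey.vMinimal {φ : K[X]} (h : IsMLVKey w φ) : VMinimal w φ := h.2.1

variable [AddCommGroup Λ]

lemma IsMLVKey.natDegree_pos (hw : IsValuation w) {φ : K[X]} (h : IsMLVKey w φ) :
    0 < φ.natDegree := by
  refine Nat.pos_of_ne_zero fun h0 => h.2.2.1 ⟨1, ?_⟩
  show w 1 < w (1 - 1 * φ)
  rw [h.1.natDegree_eq_zero.1 h0, one_mul, sub_self, hw.map_zero, hw.map_one]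
  exact WithTop.coe_lt_top 0

lemma VMinimal.map_le_map_modByMonic (hw : IsValuation w) {χ : K[X]} (hχ : VMinimal w χ)
    (hχm : χ.Monic) (f : K[X]) : w f ≤ w (f %ₘ χ) := by
  by_contra! h
  have hr0 : f %ₘ χ ≠ 0 := by
    intro h0
    rw [h0, hw.map_zero] at h
    exact not_top_lt h
  refine hχ _ hr0 (natDegree_lt_natDegree hr0 (degree_modByMonic_lt f hχm)) ⟨-(f /ₘ χ), ?_⟩
  show w (f %ₘ χ) < w (f %ₘ χ - -(f /ₘ χ) * χ)
  rwa [neg_mul, sub_neg_eq_add, mul_comm, modByMonic_add_div]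

variable [IsOrderedAddMonoid Λ]

lemma VMinimal.map_le_map_mul_divByMonic (hw : IsValuation w) {χ : K[X]} (hχ : VMinimal w χ)
    (hχm : χ.Monic) (f : K[X]) : w f ≤ w (χ * (f /ₘ χ)) := by
  have h := hw.min_le_map_add f (-(f %ₘ χ))
  have hχq : χ * (f /ₘ χ) = f + -(f %ₘ χ) := by linear_combination modByMonic_add_div f χ
  rwa [hw.map_neg, min_eq_left (hχ.map_le_map_modByMonic hw hχm f), ← hχq] at h

lemma VMinimal.map_le_map_qCoeff_mul_pow (hw : IsValuation w) {χ : K[X]} (hχ : VMinimal w χ)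
    (hχm : χ.Monic) (f : K[X]) (s : ℕ) : w f ≤ w (qCoeff χ f s * χ ^ s) := by
  induction s generalizing f with
  | zero => simpa [qCoeff_zero_eq_modByMonic] using hχ.map_le_map_modByMonic hw hχm f
  | succ s ih =>
    calc w f ≤ w (χ * (f /ₘ χ)) := hχ.map_le_map_mul_divByMonic hw hχm f
      _ = w (f /ₘ χ) + w χ := by rw [hw.map_mul, add_comm]
      _ ≤ w (qCoeff χ (f /ₘ χ) s * χ ^ s) + w χ := add_le_add (ih _) le_rfl
      _ = w (qCoeff χ f (s + 1) * χ ^ (s + 1)) := by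
        rw [qCoeff_succ, pow_succ, ← mul_assoc, hw.map_mul (_ * _) χ]

/-- A remainder of `φ` of larger value would give `φ ∼_w (φ /ₘ χ) χ`, and irreducibility would
make `φ` divide a factor of smaller degree. -/
lemma IsMLVKey.map_modByMonic_le (hw : IsValuation w) {φ χ : K[X]} (hφ : IsMLVKey w φ)
    (hχm : χ.Monic) (hχ0 : 0 < χ.natDegree) (hχφ : χ.natDegree < φ.natDegree) :
    w (φ %ₘ χ) ≤ w φ := by
  by_contra! hlt
  set q := φ /ₘ χ
  have hq0 : q ≠ 0 := by
    intro h0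
    have hφr : φ %ₘ χ = φ := by simpa [q, h0] using modByMonic_add_div φ χ
    exact hlt.ne' (congrArg w hφr)
  have hdvd : VDvd w φ (q * χ) := by
    have hqχ : q * χ = φ + -(φ %ₘ χ) := by
      linear_combination modByMonic_add_div φ χ
    refine ⟨1, ?_⟩
    show w (q * χ) < w (q * χ - 1 * φ)
    rw [hqχ, hw.map_add_of_lt (by rwa [hw.map_neg]), one_mul, add_sub_cancel_left, hw.map_neg]
    exact hlt
  have hqφ : q.natDegree < φ.natDegree := by
    rw [natDegree_divByMonic φ hχm]
    omega
  rcases hφ.2.2.2 q χ hdvd with h | h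
  · exact hφ.vMinimal q hq0 hqφ h
  · exact hφ.vMinimal χ hχm.ne_zero hχφ h

end Minimality

section PhiSet

variable {μ ν : K[X] → WithTop Λ}

lemma exists_mem_phiSet (h : ∃ g : K[X], g.Monic ∧ μ g < ν g) : ∃ χ, χ ∈ PhiSet μ ν := by
  classical
  have hex : ∃ n, ∃ g : K[X], g.Monic ∧ μ g < ν g ∧ g.natDegree = n :=
    let ⟨g, hg, hlt⟩ := h; ⟨_, g, hg, hlt, rfl⟩
  obtain ⟨χ, hχ, hχlt, hχn⟩ := Nat.find_spec hex
  exact ⟨χ, hχ, hχlt, fun ψ hψ hψlt => hχn ▸ Nat.find_min' hex ⟨ψ, hψ, hψlt, rfl⟩⟩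

variable [AddCommGroup Λ]

lemma natDegree_pos_of_mem_phiSet (hμ : IsValuation μ) (hν : IsValuation ν) {χ : K[X]}
    (hχ : χ ∈ PhiSet μ ν) : 0 < χ.natDegree := by
  refine Nat.pos_of_ne_zero fun h0 => ?_
  have hlt := hχ.2.1
  rw [hχ.1.natDegree_eq_zero.1 h0, hμ.map_one, hν.map_one] at hlt
  exact hlt.false

variable [IsOrderedAddMonoid Λ]

lemma map_C_eq_of_valLE (hμ : IsValuation μ) (hν : IsValuation ν) (hle : ValLE μ ν) (c : K) :
    μ (C c) = ν (C c) := by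
  rcases eq_or_ne c 0 with rfl | hc
  · rw [map_zero, hμ.map_zero, hν.map_zero]
  have hunit : ∀ {w : K[X] → WithTop Λ}, IsValuation w → w (C c) + w (C c⁻¹) = 0 :=
    fun hw => by rw [← hw.map_mul, ← map_mul, mul_inv_cancel₀ hc, map_one, hw.map_one]
  refine (hle _).antisymm (not_lt.1 fun hlt => ?_)
  have := WithTop.add_lt_add_of_lt_of_le (hμ.map_C_ne_top (inv_ne_zero hc)) hlt (hle (C c⁻¹))
  rw [hunit hμ, hunit hν] at this
  exact this.false

lemma map_eq_of_natDegree_lt_of_mem_phiSet (hμ : IsValuation μ) (hν : IsValuation ν)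
    (hle : ValLE μ ν) {χ f : K[X]} (hχ : χ ∈ PhiSet μ ν) (hf : f.natDegree < χ.natDegree) :
    μ f = ν f := by
  rcases eq_or_ne f 0 with rfl | hf0
  · rw [hμ.map_zero, hν.map_zero]
  refine (hle f).antisymm (not_lt.1 fun hlt => hf.not_ge ?_)
  set c := f.leadingCoeff⁻¹
  have hc : c ≠ 0 := inv_ne_zero (leadingCoeff_ne_zero.2 hf0)
  have hmonic : (C c * f).Monic := by
    rw [Monic, leadingCoeff_mul, leadingCoeff_C, inv_mul_cancel₀ (leadingCoeff_ne_zero.2 hf0)]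
  have hlt' : μ (C c * f) < ν (C c * f) := by
    rw [hμ.map_mul, hν.map_mul, map_C_eq_of_valLE hμ hν hle]
    exact (WithTop.add_lt_add_iff_left (hν.map_C_ne_top hc)).2 hlt
  simpa [natDegree_C_mul hc] using hχ.2.2 _ hmonic hlt'

/-- Writing `f = r + χ q`: if `μ r ≤ μ f` then `ν r < ν f`, so `ν (χ q) = ν r = μ r`, while
`μ (χ q) < ν (χ q)` because `μ χ < ν χ`; hence `μ f = μ (χ q) < μ r`. -/
lemma map_lt_map_modByMonic_of_mem_phiSet (hμ : IsValuation μ) (hν : IsValuation ν)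
    (hle : ValLE μ ν) {χ f : K[X]} (hχ : χ ∈ PhiSet μ ν) (hf : μ f < ν f) :
    μ f < μ (f %ₘ χ) := by
  by_contra! hc
  set r := f %ₘ χ
  set q := f /ₘ χ
  have hr : r.natDegree < χ.natDegree := by
    refine natDegree_lt_natDegree (fun h0 => ?_) (degree_modByMonic_lt f hχ.1)
    rw [show r = 0 from h0, hμ.map_zero] at hc
    exact (top_le_iff.1 hc ▸ hf).not_ge le_top
  have hrμν := map_eq_of_natDegree_lt_of_mem_phiSet hμ hν hle hχ hr
  have hνr : ν r < ν f := hrμν ▸ hc.trans_lt hf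
  have hνχq : ν (χ * q) = ν r := by
    rw [eq_sub_of_add_eq' (modByMonic_add_div f χ), sub_eq_neg_add,
      hν.map_add_of_lt (by rwa [hν.map_neg]), hν.map_neg]
  have hνq : ν q ≠ ⊤ := fun h => hνr.ne_top (by rw [← hνχq, hν.map_mul, h, add_top])
  have hμχq : μ (χ * q) < μ r := by
    rw [hrμν, ← hνχq, hμ.map_mul, hν.map_mul]
    exact WithTop.add_lt_add_of_lt_of_le (ne_top_of_le_ne_top hνq (hle q)) hχ.2.1 (hle q)
  have hμf : μ f = μ (χ * q) := by
    rw [← modByMonic_add_div f χ, add_comm, hμ.map_add_of_lt hμχq]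
  exact (hμf ▸ hμχq).not_ge hc

end PhiSet

section KeyPolynomial

variable [AddCommGroup Λ] {ν : K[X] → WithTop Λ}

lemma eps_eq_top {f : K[X]} (h : ν f = ⊤) : eps ν f = ⊤ := by
  have hex : ∃ e, IsEps ν f e := ⟨⊤, Or.inl ⟨h, rfl⟩⟩
  rw [eps, dif_pos hex]
  rcases hex.choose_spec with ⟨_, he⟩ | ⟨hne, _⟩
  · exact he
  · exact absurd h hne

/-- For nonconstant `f` with `ν f < ∞` this says `ε(f) < t`; nonzero constants satisfy it for
every `t`. -/
def EpsLt (ν : K[X] → WithTop Λ) (f : K[X]) (t : WithTop Λ) : Prop :=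
  ∀ b : ℕ, 1 ≤ b → ν f < ν (hasseDeriv b f) + b • t

variable {t : WithTop Λ} {f g : K[X]}

lemma EpsLt.ne_top (h : EpsLt ν f t) : ν f ≠ ⊤ := (h 1 le_rfl).ne_top

lemma EpsLt.le (h : EpsLt ν f t) (b : ℕ) : ν f ≤ ν (hasseDeriv b f) + b • t := by
  rcases Nat.eq_zero_or_pos b with rfl | hb
  · rw [hasseDeriv_zero', zero_nsmul, add_zero]
  · exact (h b hb).le

variable [IsOrderedAddMonoid Λ]

lemma epsLt_C (hν : IsValuation ν) {a : K} (ha : a ≠ 0) : EpsLt ν (C a) t := fun b hb => by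
  rw [hasseDeriv_C b a hb, hν.map_zero, top_add]
  exact (hν.map_C_ne_top ha).lt_top

lemma EpsLt.mul (hν : IsValuation ν) (hf : EpsLt ν f t) (hg : EpsLt ν g t) :
    EpsLt ν (f * g) t := by
  intro b hb
  rw [hasseDeriv_mul]
  refine hν.lt_map_sum_add (by rw [hν.map_mul]; exact WithTop.add_ne_top.2 ⟨hf.ne_top, hg.ne_top⟩)
    fun ij hij => ?_
  obtain rfl := HasAntidiagonal.mem_antidiagonal.1 hij
  rw [hν.map_mul, hν.map_mul, add_nsmul, add_add_add_comm]
  rcases Nat.eq_zero_or_pos ij.1 with h | h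
  · exact WithTop.add_lt_add_of_le_of_lt hf.ne_top (hf.le ij.1) (hg ij.2 (by omega))
  · exact WithTop.add_lt_add_of_lt_of_le hg.ne_top (hf ij.1 h) (hg.le ij.2)

lemma EpsLt.pow (hν : IsValuation ν) (hf : EpsLt ν f t) : ∀ n : ℕ, EpsLt ν (f ^ n) t
  | 0 => by simpa using epsLt_C hν (one_ne_zero (α := K))
  | n + 1 => by rw [pow_succ]; exact (hf.pow hν n).mul hν hf

variable [Module ℚ Λ]

/-- The candidate for `ε(f)` is `max (ν f - ν (∂_b f)) / b` over the `b` with `ν (∂_b f) < ∞`;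
these `b` are at most `deg f`, and include `deg f`. -/
lemma exists_isEps (hν : IsValuation ν) {f : K[X]} (hf : 0 < f.natDegree) (hfin : ν f ≠ ⊤) :
    ∃ e, IsEps ν f e := by
  classical
  obtain ⟨x, hx⟩ := WithTop.ne_top_iff_exists.1 hfin
  have hcoe : ∀ a : WithTop Λ, a ≠ ⊤ → ((a.untopD 0 : Λ) : WithTop Λ) = a := by
    rintro (_ | a) h
    exacts [absurd rfl h, rfl]
  set B := (Icc 1 f.natDegree).filter fun b => ν (hasseDeriv b f) ≠ ⊤
  set g : ℕ → Λ := fun b => (b : ℚ)⁻¹ • (x - (ν (hasseDeriv b f)).untopD 0)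
  have hB : ∀ {b}, b ∈ B ↔ (1 ≤ b ∧ b ≤ f.natDegree) ∧ ν (hasseDeriv b f) ≠ ⊤ := by
    simp [B]
  have hval : ∀ b ∈ B, ν (hasseDeriv b f) + b • (g b : WithTop Λ) = ν f := by
    intro b hb
    have hb0 : (b : ℚ) ≠ 0 := Nat.cast_ne_zero.2 (by have := hB.1 hb; omega)
    rw [← hcoe _ (hB.1 hb).2, ← WithTop.coe_nsmul, ← Nat.cast_smul_eq_nsmul ℚ, smul_smul,
      mul_inv_cancel₀ hb0, one_smul, ← WithTop.coe_add, add_sub_cancel, hx]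
  have hdeg : f.natDegree ∈ B := by
    refine hB.2 ⟨⟨hf, le_rfl⟩, ?_⟩
    rw [hasseDeriv_natDegree_eq_C]
    exact hν.map_C_ne_top (leadingCoeff_ne_zero.2 (ne_zero_of_natDegree_gt hf))
  obtain ⟨b₀, hb₀, hmax⟩ := B.exists_max_image g ⟨_, hdeg⟩
  refine ⟨g b₀, Or.inr ⟨hfin, fun b hb => ?_, b₀, (hB.1 hb₀).1.1, (hval b₀ hb₀).symm⟩⟩
  rcases eq_or_ne (ν (hasseDeriv b f)) ⊤ with h | h
  · rw [h, top_add]; exact le_top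
  have hbB : b ∈ B := by
    refine hB.2 ⟨⟨hb, not_lt.1 fun hlt => h ?_⟩, h⟩
    rw [hasseDeriv_eq_zero_of_lt_natDegree f b hlt, hν.map_zero]
  rw [← hval b hbB]
  gcongr
  exact WithTop.coe_le_coe.2 (hmax b hbB)

lemma eps_spec (hν : IsValuation ν) {f : K[X]} (hf : 0 < f.natDegree) (hfin : ν f ≠ ⊤) :
    IsEps ν f (eps ν f) := by
  have hex := exists_isEps hν hf hfin
  rw [eps, dif_pos hex]
  exact hex.choose_spec

lemma IsKeyPoly.epsLt (hν : IsValuation ν) {Q : K[X]} (hQ : IsKeyPoly ν Q) (hf0 : f ≠ 0)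
    (hfQ : f.natDegree < Q.natDegree) : EpsLt ν f (eps ν Q) := by
  rcases Nat.eq_zero_or_pos f.natDegree with hf | hf
  · rw [eq_C_of_natDegree_eq_zero hf]
    exact epsLt_C hν fun h => hf0 (by rw [eq_C_of_natDegree_eq_zero hf, h, map_zero])
  have hlt := hQ.2.2 f hf hfQ
  have hfin : ν f ≠ ⊤ := fun h => not_top_lt (eps_eq_top h ▸ hlt)
  obtain ⟨-, hle, -⟩ := (eps_spec hν hf hfin).resolve_left fun h => hfin h.1
  intro b hb
  rcases eq_or_ne (ν (hasseDeriv b f)) ⊤ with h | h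
  · rw [h, top_add]; exact hfin.lt_top
  calc ν f ≤ ν (hasseDeriv b f) + b • eps ν f := hle b hb
    _ < ν (hasseDeriv b f) + b • eps ν Q :=
      (WithTop.add_lt_add_iff_left h).2 (withTop_nsmul_lt_nsmul (by omega) hlt)

/-- Each term of the `θ`-expansion has `ε < ε(φ)`, hence so does their sum `φ` if no term has
value below `ν φ`; but `ε(φ)` is attained by `φ` itself. -/
lemma IsKeyPoly.exists_map_qCoeff_mul_pow_lt (hν : IsValuation ν) {φ θ : K[X]}
    (hφ : IsKeyPoly ν φ) (hθ : θ.Monic) (hθ0 : 0 < θ.natDegree)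
    (hθφ : θ.natDegree < φ.natDegree) : ∃ s, ν (qCoeff θ φ s * θ ^ s) < ν φ := by
  by_contra! hrows
  set t := eps ν φ
  have hterm : ∀ s, qCoeff θ φ s ≠ 0 → EpsLt ν (qCoeff θ φ s * θ ^ s) t := fun s hs =>
    (hφ.epsLt hν hs ((natDegree_qCoeff_lt hθ hs).trans hθφ)).mul hν
      ((hφ.epsLt hν hθ.ne_zero hθφ).pow hν s)
  have hexp := sum_qCoeff_mul_pow hθ hθ0 (lt_add_one φ.natDegree)
  have hfin : ν φ ≠ ⊤ := by
    intro htop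
    refine hφ.1.ne_zero (hexp ▸ sum_eq_zero fun s _ => ?_)
    by_contra hs
    exact (hterm s (left_ne_zero_of_mul hs)).ne_top (top_le_iff.1 (htop ▸ hrows s))
  obtain ⟨-, -, b, hb, heq⟩ := (eps_spec hν hφ.2.1 hfin).resolve_left fun h => hfin h.1
  have hsum : hasseDeriv b φ =
      ∑ s ∈ range (φ.natDegree + 1), hasseDeriv b (qCoeff θ φ s * θ ^ s) := by
    rw [← map_sum, hexp]
  refine heq.not_lt ?_
  rw [hsum]
  refine hν.lt_map_sum_add hfin fun s _ => ?_
  by_cases hs : qCoeff θ φ s = 0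
  · rw [hs, zero_mul, map_zero, hν.map_zero, top_add]
    exact hfin.lt_top
  · exact (hrows s).trans_lt (hterm s hs b hb)

end KeyPolynomial

end

variable {K : Type*} [Field K] {Λ : Type*} [AddCommGroup Λ] [LinearOrder Λ] [IsOrderedAddMonoid Λ]

variable [Module ℚ Λ]

/-- if `μ < ν`, `φ ∈ KP(μ)`, `φ ∉ Φ_{μ,ν}` and `deg φ > deg(μ)`, then `φ` is
not an abstract key polynomial for `ν`. -/
theorem stmt7 (μ ν : K[X] → WithTop Λ) (hμ : IsValuation μ) (hν : IsValuation ν)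
    (hlt : ValLT μ ν) (φ : K[X]) (hφ : IsMLVKey μ φ)
    (hnot : φ ∉ PhiSet μ ν)
    (hdeg : ∃ ψ : K[X], IsMLVKey μ ψ ∧ ψ.natDegree < φ.natDegree) :
    ¬ IsKeyPoly ν φ := by
  intro hkey
  rcases (hlt.1 φ).lt_or_eq with hμν | hμν
  · obtain ⟨ψ, hψ, hψμν, hψφ⟩ : ∃ ψ : K[X], ψ.Monic ∧ μ ψ < ν ψ ∧ ψ.natDegree < φ.natDegree := by
      by_contra! h
      exact hnot ⟨hφ.1, hμν, h⟩
    obtain ⟨χ, hχ⟩ := exists_mem_phiSet ⟨ψ, hψ, hψμν⟩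
    exact (map_lt_map_modByMonic_of_mem_phiSet hμ hν hlt.1 hχ hμν).not_ge
      (hφ.map_modByMonic_le hμ hχ.1 (natDegree_pos_of_mem_phiSet hμ hν hχ)
        ((hχ.2.2 ψ hψ hψμν).trans_lt hψφ))
  · obtain ⟨ψ, hψ, hψφ⟩ := hdeg
    obtain ⟨s, hs⟩ := hkey.exists_map_qCoeff_mul_pow_lt hν hψ.1 (hψ.natDegree_pos hμ) hψφ
    exact hs.not_ge (hμν ▸ (hψ.vMinimal.map_le_map_qCoeff_mul_pow hμ hψ.1 φ s).trans (hlt.1 _))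

end KeyPolPaper
end

section
/- Let (ρ_i, χ_i)_{i≥0} be an essential continuous MacLane chain of stable degree m on K[x]. For any two MLV limit key polynomials φ, ψ ∈ KP_∞ there exists an index i_0 such that φ ∼_{ρ_i} ψ for all i ≥ i_0. -/
open Polynomial

namespace KeyPolPaper

variable {K : Type*} [Field K] {Λ : Type*} [AddCommGroup Λ] [LinearOrder Λ] [IsOrderedAddMonoid Λ]

/-!
The difference `φ - ψ` of two limit key polynomials has degree below `m_∞`, so it is stable,
with eventual value `c`. If `ρ_i φ ≥ c` for some large `i`, non-stability of `φ` pushes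
`ρ_j φ` strictly above `c` for some `j ≥ i`; from then on the ultrametric inequality forces
`ρ_k ψ = ρ_k (φ - ψ) = c`, so `ψ` would be stable.
-/

namespace IsValuation

variable {F : Type*} [Field F] {w : F[X] → WithTop Λ}

lemma map_one_eq_zero (hw : IsValuation w) : w 1 = 0 := by
  have hfin : w 1 ≠ ⊤ := by simpa using hw.2.2.2 1 one_ne_zero
  have hsq : w 1 = w 1 + w 1 := by simpa using hw.2.1 1 1
  lift w 1 to Λ using hfin with u
  have hu : u + u = u := by exact_mod_cast hsq.symm
  simpa using hu

lemma map_neg_s16 (hw : IsValuation w) (f : F[X]) : w (-f) = w f := by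
  have hfin : w (C (-1)) ≠ ⊤ := hw.2.2.2 (-1) (neg_ne_zero.mpr one_ne_zero)
  have hsq : w (C (-1)) + w (C (-1)) = 0 := by
    rw [← hw.2.1, ← C_mul, neg_mul_neg, one_mul, C_1, hw.map_one_eq_zero]
  have hunit : w (C (-1)) = 0 := by
    lift w (C (-1)) to Λ using hfin with u
    have hu : u + u = 0 := by exact_mod_cast hsq
    rw [← two_nsmul] at hu
    exact_mod_cast (by simpa using hu : u = 0)
  rw [← neg_one_mul, ← C_1, ← C_neg, hw.2.1, hunit, zero_add]

lemma min_le_map_sub (hw : IsValuation w) (f g : F[X]) : min (w f) (w g) ≤ w (f - g) := by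
  simpa [sub_eq_add_neg, hw.map_neg_s16] using hw.2.2.1 f (-g)

lemma map_eq_map_sub_of_map_sub_lt (hw : IsValuation w) {f g : F[X]} (h : w (f - g) < w f) :
    w g = w (f - g) := by
  refine le_antisymm ?_ ?_
  · by_contra! hlt
    exact (hw.min_le_map_sub f g).not_gt (lt_min h hlt)
  · simpa [min_eq_right h.le] using hw.min_le_map_sub f (f - g)

end IsValuation

namespace MacLaneChain

variable (ch : MacLaneChain K Λ)

lemma monotone_rho (f : K[X]) : Monotone fun i => ch.ρ i f :=
  monotone_nat_of_le_succ fun i => (ch.mono i).1 f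

lemma stable_zero : ch.Stable 0 :=
  ⟨0, fun i _ => by rw [(ch.isVal i).1, (ch.isVal 0).1]⟩

lemma exists_lt_of_not_stable {f : K[X]} (hf : ¬ ch.Stable f) (i : ℕ) :
    ∃ j, i ≤ j ∧ ch.ρ i f < ch.ρ j f := by
  by_contra! h
  exact hf ⟨i, fun j hj => le_antisymm (h j hj) (ch.monotone_rho f hj)⟩

lemma stable_of_map_sub_eventually_eq {φ ψ : K[X]} {j : ℕ} {c : WithTop Λ}
    (hsub : ∀ k, j ≤ k → ch.ρ k (φ - ψ) = c) (hlt : c < ch.ρ j φ) : ch.Stable ψ := by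
  have hψ : ∀ k, j ≤ k → ch.ρ k ψ = c := fun k hk => by
    rw [← hsub k hk]
    exact (ch.isVal k).map_eq_map_sub_of_map_sub_lt
      (by rw [hsub k hk]; exact hlt.trans_le (ch.monotone_rho φ hk))
  exact ⟨j, fun k hk => by rw [hψ k hk, hψ j le_rfl]⟩

variable {ch}

lemma IsLimKP.stable_sub {φ ψ : K[X]} (hφ : ch.IsLimKP φ) (hψ : ch.IsLimKP ψ) :
    ch.Stable (φ - ψ) := by
  by_cases hφψ : φ - ψ = 0
  · rw [hφψ]
    exact ch.stable_zero
  by_contra hns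
  have hdeg : φ.degree = ψ.degree := by
    rw [degree_eq_natDegree hφ.1.ne_zero, degree_eq_natDegree hψ.1.ne_zero,
      le_antisymm (hφ.2.2 ψ hψ.2.1) (hψ.2.2 φ hφ.2.1)]
  have hlt : (φ - ψ).natDegree < φ.natDegree := natDegree_lt_natDegree hφψ
    (degree_sub_lt_left hdeg hφ.1.ne_zero (by rw [hφ.1.leadingCoeff, hψ.1.leadingCoeff]))
  exact hlt.not_ge (hφ.2.2 _ hns)

end MacLaneChain

variable [Module ℚ Λ]

theorem stmt16_general (ch : MacLaneChain K Λ)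
    (φ ψ : K[X]) (hφ : ch.IsLimKP φ) (hψ : ch.IsLimKP ψ) :
    ∃ i0 : ℕ, ∀ i : ℕ, i0 ≤ i → VEquiv (ch.ρ i) φ ψ := by
  obtain ⟨i0, hi0⟩ := hφ.stable_sub hψ
  refine ⟨i0, fun i hi => lt_of_not_ge fun hge => hψ.2.1 ?_⟩
  obtain ⟨j, hij, hlt⟩ := ch.exists_lt_of_not_stable hφ.2.1 i
  rw [hi0 i hi] at hge
  exact ch.stable_of_map_sub_eventually_eq (fun k hk => hi0 k (hi.trans (hij.trans hk)))
    (hge.trans_lt hlt)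

/-- any two MLV limit key polynomials of the chain are eventually
`ρ_i`-equivalent. -/
theorem stmt16 (ch : MacLaneChain K Λ) (hess : ch.Essential)
    (φ ψ : K[X]) (hφ : ch.IsLimKP φ) (hψ : ch.IsLimKP ψ) :
    ∃ i0 : ℕ, ∀ i : ℕ, i0 ≤ i → VEquiv (ch.ρ i) φ ψ :=
  stmt16_general ch φ ψ hφ hψ

end KeyPolPaper
end
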